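/- Let α > 2 and let nodes w have transmission powers P_w ≤ β̄·N̄·R̄^α and transmission probabilities p_w ≥ 0 such that the sum of p_w over any disk of radius R̄ is at most γ. If for each i ≥ 2 the ring C_i (points at distance in [(i+1)R̄,(i+2)R̄] from v) contains at most (6i+9)Γ² independent points, then the expected interference Σ_w p_w·P_w/dist(w,u)^α at any point u within distance R̄ of v, summed over all w at distance greater than 3R̄ from v, is at most 240·γ·β̄·N̄·Γ²·Σ_{i=1}^{n} 1/i^{α-1}. -/

import Mathlib

/-!
A node of ring `C_i` (`i ≥ 2`) is at distance at least `i R̄` from `u`, and `p_w ≤ γ` (the disk of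
radius `R̄` around `w` contains `w`), so its term is at most `γ β̄ N̄ / i^α`. The ring holds at most
`(6i + 9) Γ² ≤ 15 i Γ²` nodes, so it contributes at most `15 γ β̄ N̄ Γ² / i^(α-1)`. At most `|V|`
rings are occupied, and as `1 / i^(α-1)` decreases, the sum over their indices is dominated by the
sum over `1, …, |V|`.
-/

open Finset

theorem sum_le_sum_Icc_card_of_antitoneOn {g : ℕ → ℝ} (hg : AntitoneOn g (Set.Ici 1))
    (S : Finset ℕ) (hS : ∀ i ∈ S, 1 ≤ i) : ∑ i ∈ S, g i ≤ ∑ j ∈ Icc 1 #S, g j := by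
  induction S using Finset.induction_on_max with
  | empty => simp
  | insert a s hlt ih =>
    have ha : a ∉ s := fun h => (hlt a h).false
    have hcard : #s + 1 ≤ a := by
      have := card_le_card fun x hx => mem_Ico.2 ⟨hS x (mem_insert_of_mem hx), hlt x hx⟩
      simp only [Nat.card_Ico] at this
      have := hS a (mem_insert_self a s)
      omega
    rw [sum_insert ha, card_insert_of_notMem ha, sum_Icc_succ_top (by omega), add_comm]
    gcongr ?_ + ?_
    · exact ih fun i hi => hS i (mem_insert_of_mem hi)
    · exact hg (Set.mem_Ici.2 (by omega)) (Set.mem_Ici.2 (by omega)) hcard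

theorem sum_comp_le_sum_image_mul {ι κ : Type*} [DecidableEq κ] (s : Finset ι) (f : ι → κ)
    {h m : κ → ℝ} (hh : ∀ i ∈ s.image f, 0 ≤ h i)
    (hm : ∀ i ∈ s.image f, (#{w ∈ s | f w = i} : ℝ) ≤ m i) :
    ∑ w ∈ s, h (f w) ≤ ∑ i ∈ s.image f, m i * h i := by
  rw [sum_comp]
  refine sum_le_sum fun i hi => ?_
  rw [nsmul_eq_mul]
  exact mul_le_mul_of_nonneg_right (hm i hi) (hh i hi)

theorem mul_div_rpow_le {p P γ B R k d α : ℝ} (hp : 0 ≤ p) (hpγ : p ≤ γ) (hP : P ≤ B * R ^ α)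
    (hB : 0 ≤ B) (hk : 0 < k) (hR : 0 < R) (hd : k * R ≤ d) (hα : 0 ≤ α) :
    p * P / d ^ α ≤ γ * B / k ^ α := by
  have hγ : 0 ≤ γ := hp.trans hpγ
  calc p * P / d ^ α ≤ γ * (B * R ^ α) / (k * R) ^ α := by
        gcongr ?_ / ?_
        · calc p * P ≤ p * (B * R ^ α) := by gcongr
            _ ≤ γ * (B * R ^ α) := by gcongr
        · exact Real.rpow_le_rpow (by positivity) hd hα
    _ = γ * B / k ^ α := by
        rw [Real.mul_rpow hk.le hR.le]
        field_simp

theorem six_mul_add_nine_div_rpow_le {i α : ℝ} (hi : 1 ≤ i) :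
    (6 * i + 9) / i ^ α ≤ 15 / i ^ (α - 1) := by
  have hi0 : 0 < i := by linarith
  rw [Real.rpow_sub_one hi0.ne', div_div_eq_mul_div, div_le_div_iff_of_pos_right (by positivity)]
  linarith

theorem sum_six_mul_add_nine_div_rpow_le {α : ℝ} (hα : 1 ≤ α) (S : Finset ℕ)
    (hS : ∀ i ∈ S, 1 ≤ i) {n : ℕ} (hn : #S ≤ n) :
    ∑ i ∈ S, (6 * (i : ℝ) + 9) / (i : ℝ) ^ α ≤ 15 * ∑ i ∈ Icc 1 n, (1 : ℝ) / (i : ℝ) ^ (α - 1) := by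
  have hanti : AntitoneOn (fun i : ℕ => (1 : ℝ) / (i : ℝ) ^ (α - 1)) (Set.Ici 1) := by
    intro i hi j _ hij
    have hi0 : (0 : ℝ) < i := by exact_mod_cast hi
    exact one_div_le_one_div_of_le (by positivity)
      (Real.rpow_le_rpow hi0.le (by exact_mod_cast hij) (by linarith))
  calc ∑ i ∈ S, (6 * (i : ℝ) + 9) / (i : ℝ) ^ α
      ≤ ∑ i ∈ S, 15 * ((1 : ℝ) / (i : ℝ) ^ (α - 1)) :=
        sum_le_sum fun i hi => by
          rw [mul_one_div]
          exact six_mul_add_nine_div_rpow_le (by exact_mod_cast hS i hi)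
    _ ≤ 15 * ∑ i ∈ Icc 1 #S, (1 : ℝ) / (i : ℝ) ^ (α - 1) := by
        rw [← mul_sum]
        gcongr 15 * ?_
        exact sum_le_sum_Icc_card_of_antitoneOn hanti S hS
    _ ≤ 15 * ∑ i ∈ Icc 1 n, (1 : ℝ) / (i : ℝ) ^ (α - 1) := by
        gcongr 15 * ?_
        exact sum_le_sum_of_subset_of_nonneg (Icc_subset_Icc_right hn)
          fun i _ _ => by positivity

noncomputable def ringIndex (R d : ℝ) : ℕ := ⌊d / R⌋₊ - 1

section ringIndex

variable {R d : ℝ}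

theorem ringIndex_add_one_mul_le (hR : 0 < R) (hd : R ≤ d) :
    ((ringIndex R d : ℝ) + 1) * R ≤ d := by
  have h1 : 1 ≤ ⌊d / R⌋₊ := Nat.le_floor (by rwa [Nat.cast_one, le_div_iff₀ hR, one_mul])
  rw [ringIndex, Nat.cast_sub h1, Nat.cast_one, sub_add_cancel, ← le_div_iff₀ hR]
  exact Nat.floor_le (div_nonneg (hR.le.trans hd) hR.le)

theorem le_ringIndex_add_two_mul (hR : 0 < R) : d ≤ ((ringIndex R d : ℝ) + 2) * R := by
  rw [← div_le_iff₀ hR]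
  have : (⌊d / R⌋₊ : ℝ) ≤ (ringIndex R d : ℝ) + 1 := by
    exact_mod_cast (show ⌊d / R⌋₊ ≤ ringIndex R d + 1 by unfold ringIndex; omega)
  linarith [Nat.lt_floor_add_one (d / R)]

theorem two_le_ringIndex (hR : 0 < R) (hd : 3 * R ≤ d) : 2 ≤ ringIndex R d := by
  have : 3 ≤ ⌊d / R⌋₊ := Nat.le_floor (by rwa [Nat.cast_ofNat, le_div_iff₀ hR])
  unfold ringIndex
  omega

end ringIndex

section MetricSpace

variable {X : Type*} [PseudoMetricSpace X] {R : ℝ}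

theorem ringIndex_mul_le_dist {u v w : X} (hR : 0 < R) (hu : dist u v ≤ R)
    (hw : R ≤ dist w v) : (ringIndex R (dist w v) : ℝ) * R ≤ dist w u := by
  linarith [ringIndex_add_one_mul_le hR hw, dist_triangle w u v]

theorem filter_ringIndex_eq_subset (V : Finset X) (v : X) (hR : 0 < R) (i : ℕ) :
    {w ∈ V | 3 * R < dist w v ∧ ringIndex R (dist w v) = i} ⊆
      {w ∈ V | ((i : ℝ) + 1) * R ≤ dist w v ∧ dist w v ≤ ((i : ℝ) + 2) * R} := by
  refine monotone_filter_right V fun w _ ⟨hw, hi⟩ => ?_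
  subst hi
  exact ⟨ringIndex_add_one_mul_le hR (by linarith), le_ringIndex_add_two_mul hR⟩

theorem le_sum_filter_dist_le {s : Finset X} {f : X → ℝ} (hf : ∀ x ∈ s, 0 ≤ f x) {r : ℝ}
    (hr : 0 ≤ r) {w : X} (hw : w ∈ s) : f w ≤ ∑ x ∈ s with dist x w ≤ r, f x :=
  single_le_sum (fun x hx => hf x (mem_filter.1 hx).1) (mem_filter.2 ⟨hw, by rwa [dist_self]⟩)

end MetricSpace

open Finset in
theorem interference_bound_general
    (α β N Rbar Rmin Γ γ : ℝ)
    (hα : 2 < α) (hβ : 0 < β) (hN : 0 < N)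
    (hΓ : 1 ≤ Γ) (hΓdef : Γ = Rbar / Rmin)
    (V : Finset (EuclideanSpace ℝ (Fin 2)))
    (P p : EuclideanSpace ℝ (Fin 2) → ℝ)
    (hP : ∀ w ∈ V, P w ≤ β * N * Rbar ^ α)
    (hp : ∀ w ∈ V, 0 ≤ p w)
    (hdisk : ∀ x : EuclideanSpace ℝ (Fin 2),
      ∑ w ∈ V.filter (fun w => dist w x ≤ Rbar), p w ≤ γ)
    (v u : EuclideanSpace ℝ (Fin 2)) (hu : dist u v ≤ Rbar)
    (hrings : ∀ i : ℕ, 2 ≤ i →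
      ((V.filter (fun w => ((i : ℝ) + 1) * Rbar ≤ dist w v ∧
        dist w v ≤ ((i : ℝ) + 2) * Rbar)).card : ℝ) ≤ (6 * (i : ℝ) + 9) * Γ ^ 2) :
    ∑ w ∈ V.filter (fun w => 3 * Rbar < dist w v), p w * P w / dist w u ^ α ≤
      240 * γ * β * N * Γ ^ 2 * ∑ i ∈ Finset.Icc 1 V.card, (1 : ℝ) / (i : ℝ) ^ (α - 1) := by
  have hR : 0 < Rbar := (dist_nonneg.trans hu).lt_of_ne' fun h => by
    rw [h, zero_div] at hΓdef
    linarith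
  have hγ : 0 ≤ γ := (sum_nonneg fun w hw => hp w (mem_filter.1 hw).1).trans (hdisk v)
  set F := V.filter (fun w => 3 * Rbar < dist w v)
  set k : EuclideanSpace ℝ (Fin 2) → ℕ := fun w => ringIndex Rbar (dist w v)
  have hk2 : ∀ i ∈ F.image k, 2 ≤ i := by
    intro i hi
    obtain ⟨w, hw, rfl⟩ := mem_image.1 hi
    exact two_le_ringIndex hR (mem_filter.1 hw).2.le
  have hterm : ∀ w ∈ F, p w * P w / dist w u ^ α ≤ γ * (β * N) / (k w : ℝ) ^ α := by
    intro w hw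
    obtain ⟨hwV, hw3⟩ := mem_filter.1 hw
    have hkw := hk2 _ (mem_image_of_mem k hw)
    exact mul_div_rpow_le (hp w hwV) ((le_sum_filter_dist_le hp hR.le hwV).trans (hdisk w))
      (by simpa only [mul_assoc] using hP w hwV) (by positivity) (by positivity) hR
      (ringIndex_mul_le_dist hR hu (by linarith)) (by linarith)
  have hfiber : ∀ i ∈ F.image k, (#{w ∈ F | k w = i} : ℝ) ≤ (6 * i + 9) * Γ ^ 2 := by
    intro i hi
    refine le_trans ?_ (hrings i (hk2 i hi))
    rw [filter_filter]
    exact_mod_cast card_le_card (filter_ringIndex_eq_subset V v hR i)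
  calc ∑ w ∈ F, p w * P w / dist w u ^ α
      ≤ ∑ w ∈ F, γ * (β * N) / (k w : ℝ) ^ α := sum_le_sum hterm
    _ ≤ ∑ i ∈ F.image k, (6 * (i : ℝ) + 9) * Γ ^ 2 * (γ * (β * N) / (i : ℝ) ^ α) :=
        sum_comp_le_sum_image_mul F k (h := fun i : ℕ => γ * (β * N) / (i : ℝ) ^ α)
          (fun _ _ => by positivity) hfiber
    _ = γ * β * N * Γ ^ 2 * ∑ i ∈ F.image k, (6 * (i : ℝ) + 9) / (i : ℝ) ^ α := by
        rw [mul_sum]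
        exact sum_congr rfl fun i _ => by ring
    _ ≤ γ * β * N * Γ ^ 2 * (15 * ∑ i ∈ Icc 1 #V, (1 : ℝ) / (i : ℝ) ^ (α - 1)) := by
        gcongr
        exact sum_six_mul_add_nine_div_rpow_le (by linarith) _ (fun i hi => by linarith [hk2 i hi])
          (card_image_le.trans (card_le_card (filter_subset _ V)))
    _ ≤ 240 * γ * β * N * Γ ^ 2 * ∑ i ∈ Icc 1 #V, (1 : ℝ) / (i : ℝ) ^ (α - 1) := by
        have : 0 ≤ γ * β * N * Γ ^ 2 * ∑ i ∈ Icc 1 #V, (1 : ℝ) / (i : ℝ) ^ (α - 1) := by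
          positivity
        linarith

open Finset in
theorem interference_bound
    (α β N Rbar Rmin Γ γ : ℝ)
    (hα : 2 < α) (hβ : 0 < β) (hN : 0 < N) (hRmin : 0 < Rmin)
    (hΓ : 1 ≤ Γ) (hΓdef : Γ = Rbar / Rmin) (hγ : 0 ≤ γ)
    (V : Finset (EuclideanSpace ℝ (Fin 2)))
    (P p : EuclideanSpace ℝ (Fin 2) → ℝ)
    (hP : ∀ w ∈ V, P w ≤ β * N * Rbar ^ α)
    (hp : ∀ w ∈ V, 0 ≤ p w)
    (hdisk : ∀ x : EuclideanSpace ℝ (Fin 2),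
      ∑ w ∈ V.filter (fun w => dist w x ≤ Rbar), p w ≤ γ)
    (v u : EuclideanSpace ℝ (Fin 2)) (hu : dist u v ≤ Rbar)
    (hrings : ∀ i : ℕ, 2 ≤ i →
      ((V.filter (fun w => ((i : ℝ) + 1) * Rbar ≤ dist w v ∧
        dist w v ≤ ((i : ℝ) + 2) * Rbar)).card : ℝ) ≤ (6 * (i : ℝ) + 9) * Γ ^ 2) :
    ∑ w ∈ V.filter (fun w => 3 * Rbar < dist w v), p w * P w / dist w u ^ α ≤
      240 * γ * β * N * Γ ^ 2 * ∑ i ∈ Finset.Icc 1 V.card, (1 : ℝ) / (i : ℝ) ^ (α - 1) :=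
  interference_bound_general α β N Rbar Rmin Γ γ hα hβ hN hΓ hΓdef V P p hP hp hdisk v u hu hrings
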